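/- There exists a continuous 2-homogeneous polynomial P : c₀ → c₀ such that P(e₁ + e₂ + ⋯ + eₙ) = 0 for every n ∈ ℕ (so for the sequence (eₙ), which is equivalent to the c₀-basis, the sequence (P(∑_{i=1}^n e_i))ₙ is relatively compact), and yet for every sequence (xₙ) in c₀ equivalent to the c₀-basis, the sequence ‖P(xₙ)‖ does not converge to 0. One such polynomial is given by P(x) = ∑_{j=2}^∞ ∑_{i=1}^{j-1} (x(j) − x(i))·x(j)·e_{j²+i} for x = (x(i)) ∈ c₀. -/

import Mathlib

open Filter Topology Metric

noncomputable section

/-- The Banach space `c₀` of real sequences converging to zero, with the sup norm. -/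
abbrev c0 : Type := ZeroAtInftyContinuousMap ℕ ℝ

/-- The unit vector basis of `c₀`. -/
def e (n : ℕ) : c0 :=
  { toFun := fun i => if i = n then (1 : ℝ) else 0
    continuous_toFun := continuous_of_discreteTopology
    zero_at_infty' := by
      rw [Filter.cocompact_eq_cofinite]
      refine tendsto_const_nhds.congr' ?_
      have h : {n}ᶜ ∈ (Filter.cofinite : Filter ℕ) := by simp [Filter.cofinite]
      filter_upwards [h] with i hi
      simp only [Set.mem_compl_iff, Set.mem_singleton_iff] at hi
      simp [hi] }

/-- A series `∑ xₙ` is weakly unconditionally Cauchy (w.u.C.) if `∑ |φ (xₙ)| < ∞` for every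
continuous linear functional `φ`. -/
def WUC {X : Type*} [NormedAddCommGroup X] [NormedSpace ℝ X] (x : ℕ → X) : Prop :=
  ∀ φ : X →L[ℝ] ℝ, Summable fun n => |φ (x n)|

/-- A sequence is equivalent to the unit vector basis of `c₀`: there are `0 < c ≤ C` with
`c · maxᵢ |aᵢ| ≤ ‖∑ aᵢ xᵢ‖ ≤ C · maxᵢ |aᵢ|` for all finite scalar families. -/
def IsEquivC0Basis {X : Type*} [NormedAddCommGroup X] [NormedSpace ℝ X] (x : ℕ → X) : Prop :=
  ∃ c C : ℝ, 0 < c ∧ c ≤ C ∧ ∀ (n : ℕ) (a : ℕ → ℝ),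
    c * (⨆ i : Fin n, |a i|) ≤ ‖∑ i ∈ Finset.range n, a i • x i‖ ∧
    ‖∑ i ∈ Finset.range n, a i • x i‖ ≤ C * (⨆ i : Fin n, |a i|)

/-- A map (polynomial) is unconditionally converging if for every w.u.C. series `∑ xₙ` the
sequence of values at the partial sums converges in norm. -/
def UCPoly {X Y : Type*} [NormedAddCommGroup X] [NormedSpace ℝ X]
    [NormedAddCommGroup Y] [NormedSpace ℝ Y] (P : X → Y) : Prop :=
  ∀ x : ℕ → X, WUC x →
    ∃ L : Y, Tendsto (fun n => P (∑ i ∈ Finset.range n, x i)) atTop (𝓝 L)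

/-- An operator is unconditionally converging if it maps w.u.C. series to unconditionally
convergent series. -/
def UCOp {X Y : Type*} [NormedAddCommGroup X] [NormedSpace ℝ X]
    [NormedAddCommGroup Y] [NormedSpace ℝ Y] (T : X → Y) : Prop :=
  ∀ x : ℕ → X, WUC x → Summable fun n => T (x n)

/-- A map (polynomial or operator) is compact if the image of the closed unit ball is
relatively norm compact. -/
def CompactMap {X Y : Type*} [NormedAddCommGroup X] [NormedSpace ℝ X]
    [NormedAddCommGroup Y] [NormedSpace ℝ Y] (P : X → Y) : Prop :=
  IsCompact (closure (P '' Metric.closedBall 0 1))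

/-- A set is relatively weakly compact if its closure in the weak topology is compact. -/
def RelWeakCompact {Y : Type*} [NormedAddCommGroup Y] [NormedSpace ℝ Y] (s : Set Y) : Prop :=
  IsCompact (closure ((toWeakSpace ℝ Y) '' s))

/-- A WUC-set is the image of the closed unit ball of `c₀` under a bounded operator. -/
def IsWUCSet {X : Type*} [NormedAddCommGroup X] [NormedSpace ℝ X] (s : Set X) : Prop :=
  ∃ T : c0 →L[ℝ] X, s = ⇑T '' Metric.closedBall 0 1

/-!
The coordinate `j ^ 2 + i` of `P x`, for `1 ≤ i < j`, is `(x j - x i) x j`, which vanishes when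
`x j ∈ {0, x i}`; this holds for every 0-1 vector `e₁ + ⋯ + eₙ`. A sequence `(xₘ)` equivalent to
the `c₀`-basis is weakly null (the sums `∑ ± xₘ` are bounded) and bounded below in norm, by `c`
say. So for large `m` the coordinates `0` and `1` of `xₘ` are below `c / 4` while some coordinate
`j` exceeds `c / 2`; then `j ≥ 2` and the coordinate `j ^ 2 + 1` of `P xₘ` is at least `c ^ 2 / 8`
in absolute value.
-/

lemma c0_abs_apply_le_norm (f : c0) (n : ℕ) : |f n| ≤ ‖f‖ := by
  rw [← ZeroAtInftyContinuousMap.norm_toBCF_eq_norm]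
  exact f.toBCF.norm_coe_le_norm n

lemma c0_norm_le_of_forall_abs_le {f : c0} {C : ℝ} (hC : 0 ≤ C) (h : ∀ n, |f n| ≤ C) :
    ‖f‖ ≤ C := by
  rw [← ZeroAtInftyContinuousMap.norm_toBCF_eq_norm]
  exact (BoundedContinuousFunction.norm_le hC).2 h

def c0Coord (k : ℕ) : c0 →L[ℝ] ℝ :=
  LinearMap.mkContinuous
    { toFun := fun f => f k
      map_add' := fun _ _ => rfl
      map_smul' := fun _ _ => rfl } 1
    fun f => by simpa using c0_abs_apply_le_norm f k

@[simp] lemma c0Coord_apply (k : ℕ) (f : c0) : c0Coord k f = f k := rfl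

lemma c0_sum_apply {ι : Type*} (s : Finset ι) (f : ι → c0) (k : ℕ) :
    (∑ i ∈ s, f i) k = ∑ i ∈ s, f i k :=
  map_sum (c0Coord k) f s

lemma e_apply (n k : ℕ) : e n k = if k = n then 1 else 0 := rfl

lemma c0_hasSum_restrict_fibres (g : c0) (b : ℕ → ℕ) {f : ℕ → c0}
    (hf : ∀ j n, f j n = if b n = j then g n else 0) : HasSum f g := by
  rw [HasSum, tendsto_iff_norm_sub_tendsto_zero, NormedAddGroup.tendsto_nhds_zero]
  intro ε hε
  have hlarge : {n | ¬ |g n| < ε / 2}.Finite := by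
    have hg := g.zero_at_infty'
    rw [cocompact_eq_cofinite, NormedAddGroup.tendsto_nhds_zero] at hg
    exact eventually_cofinite.1 (hg (ε / 2) (by positivity))
  filter_upwards [eventually_ge_atTop (hlarge.toFinset.image b)] with F hF
  have hcoord : ∀ n, |(∑ j ∈ F, f j - g) n| ≤ ε / 2 := by
    intro n
    rw [ZeroAtInftyContinuousMap.coe_sub, Pi.sub_apply, c0_sum_apply]
    simp only [hf, Finset.sum_ite_eq]
    split_ifs with hn
    · simpa using (half_pos hε).le
    · have : n ∉ hlarge.toFinset := fun h => hn (hF (Finset.mem_image_of_mem b h))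
      simp only [Set.Finite.mem_toFinset, Set.mem_ofPred_eq, not_not] at this
      simpa using this.le
  rw [Real.norm_eq_abs, abs_norm]
  exact (c0_norm_le_of_forall_abs_le (by positivity) hcoord).trans_lt (by linarith)

namespace IsEquivC0Basis

variable {X : Type*} [NormedAddCommGroup X] [NormedSpace ℝ X] {x : ℕ → X}

lemma exists_pos_le_norm (hx : IsEquivC0Basis x) : ∃ c > 0, ∀ m, c ≤ ‖x m‖ := by
  obtain ⟨c, C, hc, -, h⟩ := hx
  refine ⟨c, hc, fun m => ?_⟩
  let a : ℕ → ℝ := fun i => if i = m then 1 else 0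
  have hsum : ∑ i ∈ Finset.range (m + 1), a i • x i = x m := by simp [a]
  have hsup : 1 ≤ ⨆ i : Fin (m + 1), |a i| :=
    le_ciSup_of_le (Set.finite_range _).bddAbove (Fin.last m) (by simp [a])
  calc c = c * 1 := (mul_one c).symm
    _ ≤ c * ⨆ i : Fin (m + 1), |a i| := by gcongr
    _ ≤ ‖x m‖ := hsum ▸ (h (m + 1) a).1

lemma tendsto_apply_nhds_zero (hx : IsEquivC0Basis x) (φ : X →L[ℝ] ℝ) :
    Tendsto (fun m => φ (x m)) atTop (𝓝 0) := by
  obtain ⟨c, C, hc, hcC, h⟩ := hx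
  let a : ℕ → ℝ := fun m => SignType.sign (φ (x m))
  have hbound (N : ℕ) : ∑ m ∈ Finset.range N, |φ (x m)| ≤ ‖φ‖ * C :=
    calc ∑ m ∈ Finset.range N, |φ (x m)| = φ (∑ m ∈ Finset.range N, a m • x m) := by
          simp [a, map_sum, sign_mul_self]
      _ ≤ ‖φ‖ * ‖∑ m ∈ Finset.range N, a m • x m‖ := (le_abs_self _).trans (φ.le_opNorm _)
      _ ≤ ‖φ‖ * (C * ⨆ i : Fin N, |a i|) := by gcongr; exact (h N a).2
      _ ≤ ‖φ‖ * C := by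
          gcongr
          refine mul_le_of_le_one_right (hc.le.trans hcC)
            (Real.iSup_le (fun i => ?_) zero_le_one)
          simp only [a]
          rcases lt_trichotomy (φ (x i)) 0 with h | h | h <;> simp [h]
  exact tendsto_zero_iff_abs_tendsto_zero _ |>.2
    (summable_of_sum_range_le (fun _ => abs_nonneg _) hbound).tendsto_atTop_zero

end IsEquivC0Basis

/-- The coefficient of `e n` in `∑ⱼ ∑_{1 ≤ i < j} ((x j - x i) * y j) • e (j ^ 2 + i)`, decoding
`n = j ^ 2 + i` via `j = ⌊√n⌋`. -/
def quadCoeff (x y : ℕ → ℝ) (n : ℕ) : ℝ :=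
  if n - n.sqrt ^ 2 ∈ Finset.Ico 1 n.sqrt then
    (x n.sqrt - x (n - n.sqrt ^ 2)) * y n.sqrt
  else 0

lemma quadCoeff_sq_add (x y : ℕ → ℝ) {i j : ℕ} (hij : i ∈ Finset.Ico 1 j) :
    quadCoeff x y (j ^ 2 + i) = (x j - x i) * y j := by
  have hsqrt : (j ^ 2 + i).sqrt = j := Nat.sqrt_add_eq' j (by simp at hij; omega)
  simp [quadCoeff, hsqrt, hij]

lemma quadCoeff_add_left (x x' y : ℕ → ℝ) :
    quadCoeff (x + x') y = quadCoeff x y + quadCoeff x' y := by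
  ext n; simp only [quadCoeff, Pi.add_apply]; split_ifs <;> ring

lemma quadCoeff_add_right (x y y' : ℕ → ℝ) :
    quadCoeff x (y + y') = quadCoeff x y + quadCoeff x y' := by
  ext n; simp only [quadCoeff, Pi.add_apply]; split_ifs <;> ring

lemma quadCoeff_smul_left (r : ℝ) (x y : ℕ → ℝ) : quadCoeff (r • x) y = r • quadCoeff x y := by
  ext n; simp only [quadCoeff, Pi.smul_apply, smul_eq_mul]; split_ifs <;> ring

lemma quadCoeff_smul_right (r : ℝ) (x y : ℕ → ℝ) : quadCoeff x (r • y) = r • quadCoeff x y := by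
  ext n; simp only [quadCoeff, Pi.smul_apply, smul_eq_mul]; split_ifs <;> ring

lemma abs_quadCoeff_le (x y : c0) (n : ℕ) : |quadCoeff x y n| ≤ 2 * ‖x‖ * |y n.sqrt| := by
  unfold quadCoeff
  split_ifs
  · rw [abs_mul]
    gcongr
    calc |x n.sqrt - x (n - n.sqrt ^ 2)| ≤ |x n.sqrt| + |x (n - n.sqrt ^ 2)| := abs_sub _ _
      _ ≤ 2 * ‖x‖ := by
        linarith [c0_abs_apply_le_norm x n.sqrt, c0_abs_apply_le_norm x (n - n.sqrt ^ 2)]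
  · simp only [abs_zero]; positivity

lemma tendsto_quadCoeff (x y : c0) : Tendsto (quadCoeff x y) (cocompact ℕ) (𝓝 0) := by
  have hsqrt : Tendsto Nat.sqrt (cocompact ℕ) (cocompact ℕ) := by
    simp only [cocompact_eq_cofinite, Nat.cofinite_eq_atTop]
    exact tendsto_atTop_atTop.2 fun b => ⟨b ^ 2, fun n hn => Nat.le_sqrt'.2 hn⟩
  have hy : Tendsto (fun n => 2 * ‖x‖ * |y n.sqrt|) (cocompact ℕ) (𝓝 0) := by
    simpa using ((y.zero_at_infty'.comp hsqrt).abs.const_mul (2 * ‖x‖))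
  exact squeeze_zero_norm (abs_quadCoeff_le x y) hy

def quadBilin (x y : c0) : c0 where
  toFun := quadCoeff x y
  continuous_toFun := continuous_of_discreteTopology
  zero_at_infty' := tendsto_quadCoeff x y

@[simp] lemma quadBilin_apply (x y : c0) (n : ℕ) : quadBilin x y n = quadCoeff x y n := rfl

lemma norm_quadBilin_le (x y : c0) : ‖quadBilin x y‖ ≤ 2 * ‖x‖ * ‖y‖ :=
  c0_norm_le_of_forall_abs_le (by positivity) fun n =>
    (abs_quadCoeff_le x y n).trans (by gcongr; exact c0_abs_apply_le_norm y _)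

def quadPoly : ContinuousMultilinearMap ℝ (fun _ : Fin 2 => c0) c0 :=
  MultilinearMap.mkContinuous
    { toFun := fun v => quadBilin (v 0) (v 1)
      map_update_add' := by
        intro _ v i a b
        fin_cases i <;> ext n <;>
          simp [Function.update, quadCoeff_add_left, quadCoeff_add_right]
      map_update_smul' := by
        intro _ v i r a
        fin_cases i <;> ext n <;>
          simp [Function.update, quadCoeff_smul_left, quadCoeff_smul_right] }
    2 fun v => by simpa [Fin.prod_univ_two, mul_assoc] using norm_quadBilin_le (v 0) (v 1)

lemma quadPoly_apply (v : Fin 2 → c0) : quadPoly v = quadBilin (v 0) (v 1) := rfl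

lemma sum_Ico_smul_e_apply (x y : c0) (j n : ℕ) :
    (∑ i ∈ Finset.Ico 1 j, ((x j - x i) * y j) • e (j ^ 2 + i)) n =
      if n.sqrt = j then quadCoeff x y n else 0 := by
  simp only [c0_sum_apply, ZeroAtInftyContinuousMap.coe_smul, Pi.smul_apply, e_apply,
    smul_eq_mul, mul_ite, mul_one, mul_zero]
  by_cases hn : ∃ i ∈ Finset.Ico 1 j, n = j ^ 2 + i
  · obtain ⟨i, hi, rfl⟩ := hn
    have hsqrt : (j ^ 2 + i).sqrt = j := Nat.sqrt_add_eq' j (by simp at hi; omega)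
    simp [hsqrt, quadCoeff_sq_add _ _ hi, hi]
  · rw [Finset.sum_eq_zero fun i hi => if_neg fun h => hn ⟨i, hi, h⟩]
    unfold quadCoeff
    split_ifs with hj hi <;> try rfl
    subst hj
    exact absurd ⟨_, hi, by have := Nat.sqrt_le' n; omega⟩ hn

lemma quadBilin_eq_tsum (x y : c0) :
    quadBilin x y = ∑' j : ℕ, ∑ i ∈ Finset.Ico 1 j, ((x j - x i) * y j) • e (j ^ 2 + i) :=
  (c0_hasSum_restrict_fibres _ Nat.sqrt (sum_Ico_smul_e_apply x y)).tsum_eq.symm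

lemma sum_Icc_e_apply (N k : ℕ) :
    (∑ i ∈ Finset.Icc 1 N, e i) k = if k ∈ Finset.Icc 1 N then 1 else 0 := by
  simp [c0_sum_apply, e_apply]

lemma quadBilin_sum_Icc_e (N : ℕ) :
    quadBilin (∑ i ∈ Finset.Icc 1 N, e i) (∑ i ∈ Finset.Icc 1 N, e i) = 0 := by
  rw [quadBilin_eq_tsum]
  refine (tsum_congr fun j => Finset.sum_eq_zero fun i hi => ?_).trans tsum_zero
  simp only [Finset.mem_Ico] at hi
  simp only [sum_Icc_e_apply, Finset.mem_Icc]
  split_ifs <;> first | omega | simp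

lemma abs_sub_mul_abs_le_norm_quadBilin (x : c0) {j : ℕ} (hj : 2 ≤ j) :
    |x j - x 1| * |x j| ≤ ‖quadBilin x x‖ := by
  have h := c0_abs_apply_le_norm (quadBilin x x) (j ^ 2 + 1)
  rwa [quadBilin_apply, quadCoeff_sq_add _ _ (by simp; omega), abs_mul] at h

lemma not_tendsto_norm_quadBilin_zero {x : ℕ → c0} (hx : IsEquivC0Basis x) :
    ¬ Tendsto (fun m => ‖quadBilin (x m) (x m)‖) atTop (𝓝 0) := by
  obtain ⟨c, hc, hnorm⟩ := hx.exists_pos_le_norm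
  intro hP
  have hsmall (k : ℕ) : ∀ᶠ m in atTop, |x m k| < c / 4 :=
    ((tendsto_zero_iff_abs_tendsto_zero _).1 (hx.tendsto_apply_nhds_zero (c0Coord k))
      ).eventually_lt_const (by positivity)
  have hPsmall : ∀ᶠ m in atTop, ‖quadBilin (x m) (x m)‖ < c ^ 2 / 8 :=
    hP.eventually_lt_const (by positivity)
  obtain ⟨m, h0, h1, hPm⟩ := ((hsmall 0).and ((hsmall 1).and hPsmall)).exists
  obtain ⟨j, hj⟩ : ∃ j, c / 2 < |x m j| := by
    by_contra! h
    linarith [c0_norm_le_of_forall_abs_le (by positivity) h, hnorm m]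
  have hj2 : 2 ≤ j := by
    by_contra! h
    interval_cases j <;> linarith
  have hP := abs_sub_mul_abs_le_norm_quadBilin (x m) hj2
  have hsub : c / 4 ≤ |x m j - x m 1| := by linarith [abs_sub_abs_le_abs_sub (x m j) (x m 1)]
  nlinarith

/-- There is a continuous 2-homogeneous polynomial `P : c₀ → c₀` vanishing at all the partial
sums `e₁ + ⋯ + eₙ`, while `‖P xₙ‖` does not tend to `0` for any sequence equivalent to the
`c₀`-basis; one such is `P x = ∑_{j≥2} ∑_{1≤i<j} (x j − x i) (x j) e_{j²+i}`. -/
theorem exists_vanishing_on_partial_sums_norms_not_null :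
    ∃ A : ContinuousMultilinearMap ℝ (fun _ : Fin 2 => c0) c0,
      (∀ x : c0, (A fun _ => x) =
        ∑' j : ℕ, ∑ i ∈ Finset.Ico 1 j, ((x j - x i) * x j) • e (j ^ 2 + i)) ∧
      (∀ n : ℕ, (A fun _ => ∑ i ∈ Finset.Icc 1 n, e i) = 0) ∧
      ∀ x : ℕ → c0, IsEquivC0Basis x →
        ¬ Tendsto (fun n => ‖A fun _ => x n‖) atTop (𝓝 0) :=
  ⟨quadPoly, fun x => quadBilin_eq_tsum x x, quadBilin_sum_Icc_e,
    fun _ => not_tendsto_norm_quadBilin_zero⟩
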